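/- arXiv:2305.19578 — 2 statements merged into one kernel-verified Lean document; each statement's English description precedes it below -/
import Mathlib

section
/- Let q_o > q_s > 0, γ_o > 0, γ_s > 0, η = γ_o + γ_s, and suppose condition C1 holds: η q_s/(2 q_o) < γ_o < η/2. Let p_o* = 2 γ_o γ_s q_o (q_o − q_s)/(4 γ_o γ_s q_o − η² q_s) and p_s* = η γ_o q_s (q_o − q_s)/(4 γ_o γ_s q_o − η² q_s). Then the equilibrium revenue equals π(p_o*, p_s*) = γ_o² γ_s q_o (q_o − q_s)/(4 γ_o γ_s q_o − η² q_s), where π(p_o, p_s) = γ_o p_o (1 − (p_o − p_s)/(q_o − q_s)) + γ_s p_s ((p_o − p_s)/(q_o − q_s) − p_s/q_s). -/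
/-!
Both demand factors of `π` at `(p_o*, p_s*)` are fractions over `D = 4 γ_o γ_s q_o − η² q_s`,
and substituting them leaves `γ_o² γ_s q_o (q_o − q_s) / D²` times `D` itself once `η = γ_o + γ_s`
is used. Under C1, `D > 0`: with `b = η − 2 γ_o > 0` the left half of C1 reads
`2 γ_o (q_o − q_s) > b q_s`, and `D = 4 γ_o² (q_o − q_s) + 2 b (2 γ_o (q_o − q_s)) − b² q_s > b² q_s`.
-/

theorem equilibrium_denominator_pos {qo qs γo γs η : ℝ} (hq : qs < qo) (hqs : 0 < qs)
    (hη : η = γo + γs) (hC1l : η * qs / (2 * qo) < γo) (hC1r : γo < η / 2) :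
    0 < 4 * γo * γs * qo - η ^ 2 * qs := by
  have hqo : 0 < qo := hqs.trans hq
  have hgap : η * qs < 2 * γo * qo := by
    rw [div_lt_iff₀ (by positivity)] at hC1l
    linarith
  have hb : 0 < η - 2 * γo := by linarith
  subst hη
  nlinarith [mul_pos hb (show 0 < 2 * γo * (qo - qs) - (γs - γo) * qs by linarith),
    mul_pos (mul_pos hb hb) hqs, mul_nonneg (sq_nonneg γo) (sub_nonneg.2 hq.le)]

section EquilibriumPrices

variable {qo qs γo γs η D : ℝ}

theorem one_sub_onDemand_share (hΔ : qo - qs ≠ 0) (hD : D = 4 * γo * γs * qo - η ^ 2 * qs)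
    (hD0 : D ≠ 0) :
    1 - (2 * γo * γs * qo * (qo - qs) / D - η * γo * qs * (qo - qs) / D) / (qo - qs) =
      (2 * γo * γs * qo - η ^ 2 * qs + γo * η * qs) / D := by
  field_simp
  rw [hD]
  ring

theorem spot_share (hΔ : qo - qs ≠ 0) (hqs : qs ≠ 0) :
    (2 * γo * γs * qo * (qo - qs) / D - η * γo * qs * (qo - qs) / D) / (qo - qs) -
        η * γo * qs * (qo - qs) / D / qs =
      γo * qo * (2 * γs - η) / D := by
  field_simp
  ring

end EquilibriumPrices

theorem equilibrium_revenue_general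
    (qo qs γo γs η po ps : ℝ)
    (hq : qo > qs) (hqs : qs > 0)
    (hη : η = γo + γs)
    (hC1l : η * qs / (2 * qo) < γo) (hC1r : γo < η / 2)
    (hpo : po = 2 * γo * γs * qo * (qo - qs) / (4 * γo * γs * qo - η ^ 2 * qs))
    (hps : ps = η * γo * qs * (qo - qs) / (4 * γo * γs * qo - η ^ 2 * qs)) :
    γo * po * (1 - (po - ps) / (qo - qs)) +
        γs * ps * ((po - ps) / (qo - qs) - ps / qs) =
      γo ^ 2 * γs * qo * (qo - qs) / (4 * γo * γs * qo - η ^ 2 * qs) := by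
  have hD0 := (equilibrium_denominator_pos hq hqs hη hC1l hC1r).ne'
  have hΔ : qo - qs ≠ 0 := sub_ne_zero.2 hq.ne'
  set D := 4 * γo * γs * qo - η ^ 2 * qs with hD
  subst hpo hps
  rw [one_sub_onDemand_share hΔ hD hD0, spot_share hΔ hqs.ne']
  field_simp
  rw [hD, hη]
  ring

/-- Under C1, with the equilibrium prices
`p_o* = 2 γ_o γ_s q_o (q_o − q_s)/(4 γ_o γ_s q_o − η² q_s)` and
`p_s* = η γ_o q_s (q_o − q_s)/(4 γ_o γ_s q_o − η² q_s)`, the equilibrium revenue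
equals `π(p_o*, p_s*) = γ_o² γ_s q_o (q_o − q_s)/(4 γ_o γ_s q_o − η² q_s)`, for
`π(p_o, p_s) = γ_o p_o (1 − (p_o − p_s)/(q_o − q_s)) + γ_s p_s ((p_o − p_s)/(q_o − q_s) − p_s/q_s)`. -/
theorem equilibrium_revenue
    (qo qs γo γs η po ps : ℝ)
    (hq : qo > qs) (hqs : qs > 0)
    (hγo : 0 < γo) (hγs : 0 < γs)
    (hη : η = γo + γs)
    (hC1l : η * qs / (2 * qo) < γo) (hC1r : γo < η / 2)
    (hpo : po = 2 * γo * γs * qo * (qo - qs) / (4 * γo * γs * qo - η ^ 2 * qs))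
    (hps : ps = η * γo * qs * (qo - qs) / (4 * γo * γs * qo - η ^ 2 * qs)) :
    γo * po * (1 - (po - ps) / (qo - qs)) +
        γs * ps * ((po - ps) / (qo - qs) - ps / qs) =
      γo ^ 2 * γs * qo * (qo - qs) / (4 * γo * γs * qo - η ^ 2 * qs) :=
  equilibrium_revenue_general qo qs γo γs η po ps hq hqs hη hC1l hC1r hpo hps
end

section
/- Let q_o > q_s > 0, γ_o > 0, γ_s > 0, η = γ_o + γ_s, and suppose condition C1 holds: η q_s/(2 q_o) < γ_o < η/2. Let p_o* = 2 γ_o γ_s q_o (q_o − q_s)/(4 γ_o γ_s q_o − η² q_s). Then the aggregate customers' utility of the on-demand service at equilibrium satisfies ∫_{θ_1}^{1} γ_o (θ q_o − p_o*) dθ = q_o γ_o γ_s (2 γ_o q_o − η q_s) · (γ_o q_s (γ_s − γ_o) + 2 γ_o γ_s (q_o + q_s) − η² q_s) / (2 (4 γ_o γ_s q_o − η² q_s)²), where θ_1 = (2 γ_o γ_s q_o − η γ_o q_s)/(4 γ_o γ_s q_o − η² q_s) is the equilibrium on-demand threshold. -/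
open intervalIntegral

/-! The integrand is affine in `θ`, so the integral is `γ_o (q_o (1 − θ₁²)/2 − p_o* (1 − θ₁))`.
Condition C1 makes the common denominator `4 γ_o γ_s q_o − η² q_s` of `θ₁` and `p_o*` positive,
after which the claim is an identity of rational functions. -/

theorem integral_const_mul_sub_linear (c q p a b : ℝ) :
    ∫ θ in a..b, c * (θ * q - p) = c * (q * (b ^ 2 - a ^ 2) / 2 - p * (b - a)) := by
  rw [integral_const_mul, integral_sub (intervalIntegrable_id.mul_const q) intervalIntegrable_const,
    integral_mul_const, integral_id, integral_const, smul_eq_mul]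
  ring

-- `hγ` and `hC1` are the two halves of C1 with `η = γ_o + γ_s` and denominators cleared.
theorem equilibrium_denominator_pos_s17 {qo qs γo γs : ℝ} (hqo : 0 < qo) (hγo : 0 < γo)
    (hγ : γo < γs) (hC1 : (γo + γs) * qs < 2 * γo * qo) :
    0 < 4 * γo * γs * qo - (γo + γs) ^ 2 * qs := by
  have hη : 0 < γo + γs := by linarith
  have hγoqo : 0 < γo * qo := mul_pos hγo hqo
  have : (γo + γs) ^ 2 * qs < 4 * γo * γs * qo :=
    calc (γo + γs) ^ 2 * qs = (γo + γs) * ((γo + γs) * qs) := by ring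
      _ < (γo + γs) * (2 * γo * qo) := mul_lt_mul_of_pos_left hC1 hη
      _ < 2 * γs * (2 * γo * qo) := by nlinarith
      _ = 4 * γo * γs * qo := by ring
  linarith

theorem aggregate_on_demand_utility_general
    (qo qs γo γs η po θ₁ : ℝ)
    (hq : qo > qs) (hqs : qs > 0)
    (hγo : 0 < γo)
    (hη : η = γo + γs)
    (hC1l : η * qs / (2 * qo) < γo) (hC1r : γo < η / 2)
    (hpo : po = 2 * γo * γs * qo * (qo - qs) / (4 * γo * γs * qo - η ^ 2 * qs))
    (hθ₁ : θ₁ = (2 * γo * γs * qo - η * γo * qs) / (4 * γo * γs * qo - η ^ 2 * qs)) :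
    ∫ θ in θ₁..1, γo * (θ * qo - po) =
      qo * γo * γs * (2 * γo * qo - η * qs) *
        ((γo * qs * (γs - γo) + 2 * γo * γs * (qo + qs) - η ^ 2 * qs) /
          (2 * (4 * γo * γs * qo - η ^ 2 * qs) ^ 2)) := by
  have hqo : 0 < qo := hqs.trans hq
  subst hη hpo hθ₁
  have hD := equilibrium_denominator_pos_s17 (qs := qs) hqo hγo (by linarith)
    (by linarith [(div_lt_iff₀ (by positivity)).mp hC1l]) |>.ne'
  rw [integral_const_mul_sub_linear]
  set D := 4 * γo * γs * qo - (γo + γs) ^ 2 * qs with hD_def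
  field_simp
  rw [hD_def]
  ring

/-- Under C1, with
`p_o* = 2 γ_o γ_s q_o (q_o − q_s)/(4 γ_o γ_s q_o − η² q_s)` and equilibrium
on-demand threshold `θ₁ = (2 γ_o γ_s q_o − η γ_o q_s)/(4 γ_o γ_s q_o − η² q_s)`,
the aggregate on-demand customers' utility satisfies
`∫_{θ₁}^{1} γ_o (θ q_o − p_o*) dθ = q_o γ_o γ_s (2 γ_o q_o − η q_s) ·
 (γ_o q_s (γ_s − γ_o) + 2 γ_o γ_s (q_o + q_s) − η² q_s) / (2 (4 γ_o γ_s q_o − η² q_s)²)`. -/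
theorem aggregate_on_demand_utility
    (qo qs γo γs η po θ₁ : ℝ)
    (hq : qo > qs) (hqs : qs > 0)
    (hγo : 0 < γo) (hγs : 0 < γs)
    (hη : η = γo + γs)
    (hC1l : η * qs / (2 * qo) < γo) (hC1r : γo < η / 2)
    (hpo : po = 2 * γo * γs * qo * (qo - qs) / (4 * γo * γs * qo - η ^ 2 * qs))
    (hθ₁ : θ₁ = (2 * γo * γs * qo - η * γo * qs) / (4 * γo * γs * qo - η ^ 2 * qs)) :
    ∫ θ in θ₁..1, γo * (θ * qo - po) =
      qo * γo * γs * (2 * γo * qo - η * qs) *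
        ((γo * qs * (γs - γo) + 2 * γo * γs * (qo + qs) - η ^ 2 * qs) /
          (2 * (4 * γo * γs * qo - η ^ 2 * qs) ^ 2)) :=
  aggregate_on_demand_utility_general qo qs γo γs η po θ₁ hq hqs hγo hη hC1l hC1r hpo hθ₁
end
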